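/- Let β ∈ ℂ. Define ℂ-linear endomorphisms L_i, H_i, G_i⁺, G_i⁻ (i ∈ ℤ) of V by: L_i x_j = −(i/2 + j)·x_{i+j}; L_i y_k = −k·y_{i+k} for k ≠ −i, L_i y_{−i} = (i·β + i²/2)·y_0; H_i x_j = −x_{i+j}; H_i y_k = 0 for k ≠ −i, H_i y_{−i} = i·y_0; G_i⁻ x_j = 0 for all j (including G_i⁻ x_{−i} = 0), G_i⁺ y_j = 0 for all j; G_i⁺ x_k = y_{i+k} for k ≠ −i, G_i⁺ x_{−i} = (β + i)·y_0; G_i⁻ y_j = −2j·x_{i+j}. Then these operators satisfy the Ramond N=2 relations with zero central charge. -/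

import Mathlib

noncomputable section

/-- The underlying space of the intermediate-series modules: two copies of `ℤ →₀ ℂ`. -/
abbrev V : Type := (ℤ →₀ ℂ) × (ℤ →₀ ℂ)

/-- The basis vectors `x j`. -/
def x (j : ℤ) : V := (Finsupp.single j 1, 0)

/-- The basis vectors `y j`. -/
def y (j : ℤ) : V := (0, Finsupp.single j 1)

lemma ext_basis (P Q : V →ₗ[ℂ] V)
    (hx : ∀ j, P (x j) = Q (x j)) (hy : ∀ j, P (y j) = Q (y j)) : P = Q := by
  have hsx : ∀ (a : ℤ) (c : ℂ), ((Finsupp.single a c, 0) : V) = c • x a := by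
    intro a c
    simp only [x, Prod.smul_mk, smul_zero]
    congr 1
    rw [Finsupp.smul_single, smul_eq_mul, mul_one]
  have hsy : ∀ (a : ℤ) (c : ℂ), ((0, Finsupp.single a c) : V) = c • y a := by
    intro a c
    simp only [y, Prod.smul_mk, smul_zero]
    congr 1
    rw [Finsupp.smul_single, smul_eq_mul, mul_one]
  have h1 : ∀ a : ℤ →₀ ℂ, P (a, 0) = Q (a, 0) := by
    intro a
    induction a using Finsupp.induction_linear with
    | zero => exact (map_zero P).trans (map_zero Q).symm
    | add f g hf hg =>
        have h : ((f + g : ℤ →₀ ℂ), (0 : ℤ →₀ ℂ)) = ((f, 0) : V) + (g, 0) := by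
          simp [Prod.ext_iff]
        rw [h, map_add, map_add, hf, hg]
    | single a c =>
        rw [hsx, map_smul, map_smul, hx]
  have h2 : ∀ b : ℤ →₀ ℂ, P (0, b) = Q (0, b) := by
    intro b
    induction b using Finsupp.induction_linear with
    | zero => exact (map_zero P).trans (map_zero Q).symm
    | add f g hf hg =>
        have h : ((0 : ℤ →₀ ℂ), (f + g : ℤ →₀ ℂ)) = ((0, f) : V) + (0, g) := by
          simp [Prod.ext_iff]
        rw [h, map_add, map_add, hf, hg]
    | single a c =>
        rw [hsy, map_smul, map_smul, hy]
  apply LinearMap.ext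
  rintro ⟨a, b⟩
  have h : ((a, b) : V) = ((a, 0) : V) + (0, b) := by simp
  rw [h, map_add, map_add, h1, h2]

/-- Commutator of endomorphisms. -/
def bracket (P Q : V →ₗ[ℂ] V) : V →ₗ[ℂ] V := P ∘ₗ Q - Q ∘ₗ P

/-- Anticommutator of endomorphisms. -/
def abracket (P Q : V →ₗ[ℂ] V) : V →ₗ[ℂ] V := P ∘ₗ Q + Q ∘ₗ P

/-- The relations of the Ramond N=2 superconformal algebra with zero central charge. -/
def RamondRel (L H Gp Gm : ℤ → (V →ₗ[ℂ] V)) : Prop :=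
  (∀ i j : ℤ, bracket (L i) (L j) = ((i : ℂ) - (j : ℂ)) • L (i + j)) ∧
  (∀ i j : ℤ, bracket (L i) (H j) = (-(j : ℂ)) • H (i + j)) ∧
  (∀ i j : ℤ, bracket (H i) (H j) = 0) ∧
  (∀ i j : ℤ, bracket (L i) (Gp j) = ((i : ℂ) / 2 - (j : ℂ)) • Gp (i + j)) ∧
  (∀ i j : ℤ, bracket (L i) (Gm j) = ((i : ℂ) / 2 - (j : ℂ)) • Gm (i + j)) ∧
  (∀ i j : ℤ, bracket (H i) (Gp j) = Gp (i + j)) ∧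
  (∀ i j : ℤ, bracket (H i) (Gm j) = - Gm (i + j)) ∧
  (∀ i j : ℤ, abracket (Gp i) (Gp j) = 0) ∧
  (∀ i j : ℤ, abracket (Gm i) (Gm j) = 0) ∧
  (∀ i j : ℤ, abracket (Gm i) (Gp j) = (2 : ℂ) • L (i + j) - ((i : ℂ) - (j : ℂ)) • H (i + j))

theorem stmt_15 (β : ℂ) (L H Gp Gm : ℤ → (V →ₗ[ℂ] V))
    (hLx : ∀ i j : ℤ, L i (x j) = (-((i : ℂ) / 2 + (j : ℂ))) • x (i + j))
    (hLy : ∀ i k : ℤ, k ≠ -i → L i (y k) = (-(k : ℂ)) • y (i + k))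
    (hLy0 : ∀ i : ℤ, L i (y (-i)) = ((i : ℂ) * β + (i : ℂ)^2 / 2) • y 0)
    (hHx : ∀ i j : ℤ, H i (x j) = (-1 : ℂ) • x (i + j))
    (hHy : ∀ i k : ℤ, k ≠ -i → H i (y k) = 0)
    (hHy0 : ∀ i : ℤ, H i (y (-i)) = (i : ℂ) • y 0)
    (hGmx : ∀ i j : ℤ, Gm i (x j) = 0)
    (hGpy : ∀ i j : ℤ, Gp i (y j) = 0)
    (hGpx : ∀ i k : ℤ, k ≠ -i → Gp i (x k) = y (i + k))
    (hGpx0 : ∀ i : ℤ, Gp i (x (-i)) = (β + (i : ℂ)) • y 0)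
    (hGmy : ∀ i j : ℤ, Gm i (y j) = (-(2 * (j : ℂ))) • x (i + j)) :
    RamondRel L H Gp Gm := by

  have hite : ∀ (P : V →ₗ[ℂ] V) (c : Prop) (inst : Decidable c) (a b : V),
      P (if c then a else b) = if c then P a else P b := by
    intro P c inst a b; split_ifs <;> rfl
  have hLy' : ∀ i k : ℤ, L i (y k) =
      if k = -i then ((i:ℂ) * β + (i:ℂ)^2/2) • y 0 else (-(k:ℂ)) • y (i+k) := by
    intro i k; split_ifs with h
    · subst h; exact hLy0 i
    · exact hLy i k h
  have hHy' : ∀ i k : ℤ, H i (y k) = if k = -i then (i:ℂ) • y 0 else 0 := by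
    intro i k; split_ifs with h
    · subst h; exact hHy0 i
    · exact hHy i k h
  have hGpx' : ∀ i k : ℤ, Gp i (x k) = if k = -i then (β + (i:ℂ)) • y 0 else y (i+k) := by
    intro i k; split_ifs with h
    · subst h; exact hGpx0 i
    · exact hGpx i k h
  refine ⟨?_, ?_, ?_, ?_, ?_, ?_, ?_, ?_, ?_, ?_⟩ <;>
    intro i j <;>
    refine ext_basis _ _ (fun k => ?_) (fun k => ?_) <;>
    simp only [bracket, abracket, LinearMap.sub_apply, LinearMap.add_apply,
      LinearMap.comp_apply, LinearMap.smul_apply, LinearMap.zero_apply, LinearMap.neg_apply,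
      hLx, hHx, hGmx, hGpy, hGmy, hLy', hHy', hGpx', hite, map_smul, map_zero, map_neg,
      smul_ite, smul_zero, zero_smul, smul_smul] <;>
    (try split_ifs) <;>
    first
      | (exfalso; omega)
      | ((try ((have hk : k = -j := by omega); subst hk));
         (try ((have hk : k = -i := by omega); subst hk));
         (try ((have hk : k = -i - j := by omega); subst hk));
         (try ((have hk : i = 0 := by omega); subst hk));
         (try ((have hk : j = 0 := by omega); subst hk));
         (try ((have hk : i = j := by omega); subst hk));
         push_cast;
         (try ring_nf);
         (try rfl);
         match_scalars <;> ring)
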